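/- arXiv:2403.14043 — 2 statements merged into one kernel-verified Lean document; each statement's English description precedes it below -/
import Mathlib

section
/- For any relational frame (X, ◁), the following are equivalent: (a) for every c_◁-fixpoint A, A ⊆ ¬_◁(¬_◁(A)); (b) ◁ is pseudo-symmetric, i.e., for all x ∈ X and y with y ◁ x, there exists z with z ◁ y such that z pre-refines x. -/
/-- The closure operator `c_◁` of a relational frame `(X, ◁)`, where `lt y x` means `y ◁ x`. -/
def clOp {X : Type*} (lt : X → X → Prop) (A : Set X) : Set X :=
  {x | ∀ y, lt y x → ∃ z, lt y z ∧ z ∈ A}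

/-- The negation operation `¬_◁` of a relational frame. -/
def ngOp {X : Type*} (lt : X → X → Prop) (A : Set X) : Set X :=
  {x | ∀ y, lt y x → y ∉ A}

/-- The necessity operation `□_R`. -/
def boxOp {X : Type*} (R : X → X → Prop) (A : Set X) : Set X :=
  {x | ∀ y, R x y → y ∈ A}

/-- The possibility operation `◇_Q`. -/
def diaOp {X : Type*} (lt Q : X → X → Prop) (A : Set X) : Set X :=
  {x | ∀ x', lt x' x → ∃ y' y, Q x' y' ∧ lt y' y ∧ y ∈ A}

/-- The defining condition of a modal frame (interaction of `R` and `◁`). -/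
def IsModalFrame {X : Type*} (lt R : X → X → Prop) : Prop :=
  ∀ x y z, R x y → lt z y →
    ∃ x', lt x' x ∧ ∀ x'', lt x' x'' → ∃ y'', R x'' y'' ∧ lt z y''

/-- The additivity condition of a modal frame (interaction of `Q` and `◁`). -/
def IsAdditiveFrame {X : Type*} (lt Q : X → X → Prop) : Prop :=
  ∀ x y z, Q x y → lt y z →
    ∃ x', lt x x' ∧ ∀ x'', lt x'' x' → ∃ y'', Q x'' y'' ∧ lt y'' z

/-- The negativity condition of a modal frame. -/
def IsNegativeFrame {X : Type*} (lt R Q : X → X → Prop) : Prop :=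
  ∀ x y z, R x y → lt z y →
    ∃ x', lt x' x ∧ ∀ x'', lt x'' x' → ∃ y'', Q x'' y'' ∧ lt y'' z

/-- `z` pre-refines `x`. -/
def PreRefines {X : Type*} (lt : X → X → Prop) (z x : X) : Prop :=
  ∀ w, lt w z → lt w x

/-- `◁` is pseudo-reflexive. -/
def PseudoRefl {X : Type*} (lt : X → X → Prop) : Prop :=
  ∀ x, (∃ y, lt y x) → ∃ z, lt z x ∧ PreRefines lt z x

/-- `◁` is pseudo-symmetric. -/
def PseudoSymm {X : Type*} (lt : X → X → Prop) : Prop :=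
  ∀ x y, lt y x → ∃ z, lt z y ∧ PreRefines lt z x

/-!
If `z ◁ y ◁ x` with `z` pre-refining `x`, then `z` lies in every `c_◁`-fixpoint containing `x`,
which is exactly what `x ∈ ¬¬A` needs at `y`. Conversely, the pre-refiners of `x` form a
`c_◁`-fixpoint containing `x`, and `x ∈ ¬¬A` for that set is pseudo-symmetry at `x`.
-/

section

variable {X : Type*} {lt : X → X → Prop}

theorem PreRefines.refl (x : X) : PreRefines lt x x := fun _ h => h

theorem mem_clOp_of_preRefines {A : Set X} {x z : X} (hx : x ∈ A) (hzx : PreRefines lt z x) :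
    z ∈ clOp lt A :=
  fun w hwz => ⟨x, hzx w hwz, hx⟩

theorem clOp_setOf_preRefines (x : X) :
    clOp lt {z | PreRefines lt z x} = {z | PreRefines lt z x} := by
  ext v
  constructor
  · intro hv w hwv
    obtain ⟨u, hwu, hux⟩ := hv w hwv
    exact hux w hwu
  · exact mem_clOp_of_preRefines (PreRefines.refl x)

theorem PseudoSymm.subset_ngOp_ngOp (hs : PseudoSymm lt) {A : Set X} (hA : clOp lt A ⊆ A) :
    A ⊆ ngOp lt (ngOp lt A) := by
  intro x hx y hyx hy
  obtain ⟨z, hzy, hzx⟩ := hs x y hyx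
  exact hy z hzy (hA (mem_clOp_of_preRefines hx hzx))

theorem pseudoSymm_of_forall_subset_ngOp_ngOp
    (h : ∀ A : Set X, clOp lt A = A → A ⊆ ngOp lt (ngOp lt A)) : PseudoSymm lt := by
  intro x y hyx
  have hx : x ∈ ngOp lt (ngOp lt {z | PreRefines lt z x}) :=
    h _ (clOp_setOf_preRefines x) (PreRefines.refl x)
  by_contra! hno
  exact hx y hyx hno

end

theorem stmt_5_general {X : Type*} (lt : X → X → Prop) :
    (∀ A : Set X, clOp lt A = A → A ⊆ ngOp lt (ngOp lt A)) ↔ PseudoSymm lt :=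
  ⟨pseudoSymm_of_forall_subset_ngOp_ngOp, fun hs _ hA => hs.subset_ngOp_ngOp hA.subset⟩

theorem stmt_5 {X : Type*} [Nonempty X] (lt : X → X → Prop) :
    (∀ A : Set X, clOp lt A = A → A ⊆ ngOp lt (ngOp lt A)) ↔ PseudoSymm lt :=
  stmt_5_general lt
end

section
/- Let (X, ◁, R, Q) be an additive modal frame. Then ◇_Q is completely additive on the complete lattice of c_◁-fixpoints: for any family {A_i}_{i∈I} of c_◁-fixpoints, ◇_Q(c_◁(⋃_{i∈I} A_i)) = c_◁(⋃_{i∈I} ◇_Q(A_i)), where the c_◁-closure of union is the join in the lattice of c_◁-fixpoints. -/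
/-!
The inclusion `c_◁(⋃ ◇_Q Aᵢ) ⊆ ◇_Q(c_◁(⋃ Aᵢ))` holds in every frame: `◇_Q` is monotone, `c_◁` is
inflationary and every `◇_Q B` is already `c_◁`-closed. For the converse, a witness `u ∈ Aᵢ` of
`x ∈ ◇_Q(c_◁(⋃ Aᵢ))` below some `y ◁ x` is turned by additivity into a point `x'` with `y ◁ x'`
and `x' ∈ ◇_Q Aᵢ`.
-/

section Frame

variable {X : Type*} {lt Q : X → X → Prop}

theorem subset_clOp (A : Set X) : A ⊆ clOp lt A :=
  fun y hy _ hzy => ⟨y, hzy, hy⟩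

theorem clOp_mono {A B : Set X} (h : A ⊆ B) : clOp lt A ⊆ clOp lt B := fun x hx y hyx => by
  obtain ⟨z, hyz, hz⟩ := hx y hyx
  exact ⟨z, hyz, h hz⟩

theorem diaOp_mono {A B : Set X} (h : A ⊆ B) : diaOp lt Q A ⊆ diaOp lt Q B := fun x hx x' hx'x => by
  obtain ⟨y', y, hQ, hy'y, hy⟩ := hx x' hx'x
  exact ⟨y', y, hQ, hy'y, h hy⟩

theorem clOp_diaOp_subset (A : Set X) : clOp lt (diaOp lt Q A) ⊆ diaOp lt Q A := by
  intro x hx x' hx'x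
  obtain ⟨z, hx'z, hz⟩ := hx x' hx'x
  exact hz x' hx'z

theorem clOp_iUnion_diaOp_subset {ι : Type*} (A : ι → Set X) :
    clOp lt (⋃ i, diaOp lt Q (A i)) ⊆ diaOp lt Q (clOp lt (⋃ i, A i)) :=
  calc clOp lt (⋃ i, diaOp lt Q (A i))
      ⊆ clOp lt (diaOp lt Q (clOp lt (⋃ i, A i))) :=
        clOp_mono <| Set.iUnion_subset fun i =>
          diaOp_mono <| (Set.subset_iUnion A i).trans (subset_clOp _)
    _ ⊆ diaOp lt Q (clOp lt (⋃ i, A i)) := clOp_diaOp_subset _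

theorem IsAdditiveFrame.exists_lt_mem_diaOp (hAdd : IsAdditiveFrame lt Q) {A : Set X}
    {y y' u : X} (hQ : Q y y') (hy'u : lt y' u) (hu : u ∈ A) :
    ∃ x', lt y x' ∧ x' ∈ diaOp lt Q A := by
  obtain ⟨x', hyx', hx'⟩ := hAdd y y' u hQ hy'u
  refine ⟨x', hyx', fun x'' hx'' => ?_⟩
  obtain ⟨y'', hQ'', hy''u⟩ := hx' x'' hx''
  exact ⟨y'', u, hQ'', hy''u, hu⟩

theorem IsAdditiveFrame.diaOp_clOp_iUnion_subset (hAdd : IsAdditiveFrame lt Q) {ι : Type*}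
    (A : ι → Set X) :
    diaOp lt Q (clOp lt (⋃ i, A i)) ⊆ clOp lt (⋃ i, diaOp lt Q (A i)) := by
  intro x hx y hyx
  obtain ⟨y', w, hQ, hy'w, hw⟩ := hx y hyx
  obtain ⟨u, hy'u, hu⟩ := hw y' hy'w
  obtain ⟨i, hui⟩ := Set.mem_iUnion.mp hu
  obtain ⟨x', hyx', hx'⟩ := hAdd.exists_lt_mem_diaOp hQ hy'u hui
  exact ⟨x', hyx', Set.mem_iUnion_of_mem i hx'⟩

end Frame

theorem stmt_8_general {X : Type*} (lt Q : X → X → Prop)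
    (hAdd : IsAdditiveFrame lt Q)
    {ι : Type*} (A : ι → Set X) :
    diaOp lt Q (clOp lt (⋃ i, A i)) = clOp lt (⋃ i, diaOp lt Q (A i)) :=
  (hAdd.diaOp_clOp_iUnion_subset A).antisymm (clOp_iUnion_diaOp_subset A)

theorem stmt_8 {X : Type*} [Nonempty X] (lt R Q : X → X → Prop)
    (hMF : IsModalFrame lt R) (hAdd : IsAdditiveFrame lt Q)
    {ι : Type*} (A : ι → Set X) (hA : ∀ i, clOp lt (A i) = A i) :
    diaOp lt Q (clOp lt (⋃ i, A i)) = clOp lt (⋃ i, diaOp lt Q (A i)) :=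
  stmt_8_general lt Q hAdd A
end
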